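/- Let p be an indeterminate and x a variable. Set L = x^2 - px - 1, l = -L/(p^2+4), and r = (x+2p)/(p^2+4) + (p^2+4)(px+2)/L^2 + (x(p+2) + p^2 - p + 6)/L - 5p/(2(p^2+4)). Then Lecacheux's polynomial Lec(p,r;l) = l^5 + (r^2(p^2+4) - 2p - 17/4) l^4 + (3r(p^2+4) + p^2 + 13p/2 + 5) l^3 - (r(p^2+4) + 11p/2 - 8) l^2 + (p-6) l + 1 vanishes identically as a rational function of p and x. -/

import Mathlib

/-!
Writing `D = p² + 4`, the substitution is `l = -L/D` and `r = N/(2 D L²)` with `N` a polynomial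
in `p` and `x`, so multiplying `Lec(p, r; l)` by `4 D⁵ L⁴` leaves a polynomial identity in `p` and
`x`. It holds over every field of characteristic different from `2`, as soon as `D` and `L` are
nonzero; in `ℚ(p, x)` they are, being monic polynomials in `p` and in `x` respectively.
-/

/-- The field `ℚ(p, x)` realized as `RatFunc (RatFunc ℚ)`,
with `p` the inner variable and `x` the outer variable. -/
noncomputable abbrev K3 : Type := RatFunc (RatFunc ℚ)

noncomputable def pv : K3 := RatFunc.C RatFunc.X

noncomputable def xv : K3 := RatFunc.X

/-- `L = x² - px - 1`. -/
noncomputable def Lv : K3 := xv ^ 2 - pv * xv - 1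

/-- `l = -L/(p²+4)`. -/
noncomputable def lv : K3 := -Lv / (pv ^ 2 + 4)

/-- `r = (x+2p)/(p²+4) + (p²+4)(px+2)/L² + (x(p+2)+p²-p+6)/L - 5p/(2(p²+4))`. -/
noncomputable def rv : K3 :=
  (xv + 2 * pv) / (pv ^ 2 + 4) + (pv ^ 2 + 4) * (pv * xv + 2) / Lv ^ 2 +
    (xv * (pv + 2) + (pv ^ 2 - pv + 6)) / Lv - 5 * pv / (2 * (pv ^ 2 + 4))

/-- `Lec(p, r; X)`. -/
def lecacheux {F : Type*} [Field F] (p r X : F) : F :=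
  X ^ 5 + (r ^ 2 * (p ^ 2 + 4) - 2 * p - 17 / 4) * X ^ 4 +
    (3 * r * (p ^ 2 + 4) + p ^ 2 + 13 / 2 * p + 5) * X ^ 3 -
    (r * (p ^ 2 + 4) + 11 / 2 * p - 8) * X ^ 2 + (p - 6) * X + 1

theorem lecacheux_substitution_eq_zero {F : Type*} [Field F] (p x : F) (h2 : (2 : F) ≠ 0)
    (hD : p ^ 2 + 4 ≠ 0) (hL : x ^ 2 - p * x - 1 ≠ 0) :
    lecacheux p
      ((x + 2 * p) / (p ^ 2 + 4) + (p ^ 2 + 4) * (p * x + 2) / (x ^ 2 - p * x - 1) ^ 2 +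
        (x * (p + 2) + (p ^ 2 - p + 6)) / (x ^ 2 - p * x - 1) - 5 * p / (2 * (p ^ 2 + 4)))
      (-(x ^ 2 - p * x - 1) / (p ^ 2 + 4)) = 0 := by
  have h4 : (4 : F) ≠ 0 := by
    rw [show (4 : F) = 2 * 2 by norm_num]
    exact mul_ne_zero h2 h2
  unfold lecacheux
  -- Clearing denominators with `L` and `D` kept atomic keeps `field_simp` within bounds.
  generalize hLdef : x ^ 2 - p * x - 1 = L at hL ⊢
  generalize hDdef : p ^ 2 + 4 = D at hD ⊢
  field_simp
  subst hLdef hDdef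
  ring

open Polynomial in
lemma pv_sq_add_four_ne_zero : pv ^ 2 + 4 ≠ 0 := by
  have hX : (RatFunc.X : RatFunc ℚ) ^ 2 + 4 ≠ 0 := by
    have hmonic : (X ^ 2 + C 4 : ℚ[X]).Monic := monic_X_pow_add_C 4 two_ne_zero
    simpa using RatFunc.algebraMap_ne_zero hmonic.ne_zero
  simpa [pv, map_ofNat] using (_root_.map_ne_zero RatFunc.C).mpr hX

open Polynomial in
lemma Lv_ne_zero : Lv ≠ 0 := by
  have hmonic : (X ^ 2 - C RatFunc.X * X - 1 : (RatFunc ℚ)[X]).Monic := by monicity!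
  simpa [Lv, pv, xv] using RatFunc.algebraMap_ne_zero hmonic.ne_zero

/-- Lecacheux's polynomial `Lec(p, r; l)` vanishes identically under the stated substitutions. -/
theorem lecacheux_vanishes :
    lv ^ 5 + (rv ^ 2 * (pv ^ 2 + 4) - 2 * pv - 17 / 4) * lv ^ 4 +
      (3 * rv * (pv ^ 2 + 4) + pv ^ 2 + 13 / 2 * pv + 5) * lv ^ 3 -
      (rv * (pv ^ 2 + 4) + 11 / 2 * pv - 8) * lv ^ 2 + (pv - 6) * lv + 1 = 0 :=
  lecacheux_substitution_eq_zero pv xv two_ne_zero pv_sq_add_four_ne_zero Lv_ne_zero
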